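/- arXiv:1812.10471 — 7 statements merged into one kernel-verified Lean document; each statement's English description precedes it below -/
import Mathlib

section
/- Let M ∈ ℝ^{k×n} have trivial left null space (N(Mᵀ) = {0}), P ∈ ℝ^{r×n}, q ∈ ℝᵏ, d ∈ ℝʳ, and suppose the system Mz = q, Pz ≤ d is feasible. Then there exists z̄ with Mz̄ = q and Pz̄ < d (strict componentwise) if and only if the only pair (u, v) with qᵀu + dᵀv ≤ 0, Mᵀu + Pᵀv = 0, and v ≥ 0 has v = 0. -/
/-!
Necessity is complementary slackness: if `Mz̄ = q`, `Pz̄ < d` and `Mᵀu + Pᵀv = 0`, then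
`vᵀ(d - Pz̄) = qᵀu + dᵀv ≤ 0` is a sum of nonnegative terms, each with a positive second
factor, so `v = 0`.

Sufficiency: if no strictly feasible point exists, the convex set `{Pz - d | Mz = q}` misses
the open negative orthant, and Hahn–Banach separation yields `v ≥ 0`, `v ≠ 0` with
`vᵀ(Pz - d) ≥ 0` whenever `Mz = q`. An affine function bounded below on the affine set
`{Mz = q}` is constant on it, so `Pᵀv` vanishes on `ker M`, i.e. `Pᵀv = -Mᵀu` for some `u`,
and then `qᵀu + dᵀv = -vᵀ(Pz₀ - d) ≤ 0` for a feasible `z₀`.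
-/

open Matrix Set

theorem nonpos_of_forall_nonneg_mul_le {K : Type*} [Field K] [LinearOrder K]
    [IsStrictOrderedRing K] {a u : K} (h : ∀ t : K, 0 ≤ t → t * a ≤ u) : a ≤ 0 := by
  by_contra! ha
  have := h ((|u| + 1) / a) (by positivity)
  rw [div_mul_cancel₀ _ ha.ne'] at this
  linarith [le_abs_self u]

theorem eq_zero_of_forall_add_mul_nonneg {K : Type*} [Field K] [LinearOrder K]
    [IsStrictOrderedRing K] {a b : K} (h : ∀ t : K, 0 ≤ a + t * b) : b = 0 := by
  by_contra hb
  have := h (-(a + 1) / b)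
  rw [div_mul_cancel₀ _ hb] at this
  linarith

theorem Matrix.dotProduct_pos_of_nonneg_of_ne_zero {R ι : Type*} [Semiring R] [PartialOrder R]
    [IsStrictOrderedRing R] [Fintype ι] {v w : ι → R} (hv : 0 ≤ v) (hv0 : v ≠ 0)
    (hw : ∀ j, 0 < w j) : 0 < v ⬝ᵥ w := by
  obtain ⟨j, hj⟩ := Function.ne_iff.1 hv0
  exact Finset.sum_pos' (fun i _ ↦ mul_nonneg (hv i) (hw i).le)
    ⟨j, Finset.mem_univ j, mul_pos ((hv j).lt_of_ne' hj) (hw j)⟩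

theorem Matrix.exists_transpose_mulVec_eq_of_forall_mulVec_eq_zero {K m n : Type*} [Field K]
    [Fintype m] [Fintype n] (M : Matrix m n K) (w : n → K)
    (hw : ∀ z, M *ᵥ z = 0 → w ⬝ᵥ z = 0) : ∃ u, Mᵀ *ᵥ u = w := by
  classical
  obtain ⟨g, hg⟩ : dotProductEquiv K n w ∈ LinearMap.range M.mulVecLin.dualMap := by
    rw [LinearMap.range_dualMap_eq_dualAnnihilator_ker, Submodule.mem_dualAnnihilator]
    exact hw
  obtain ⟨u, rfl⟩ := (dotProductEquiv K m).surjective g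
  refine ⟨u, (dotProductEquiv K n).injective <| hg ▸ LinearMap.ext fun z ↦ ?_⟩
  simp [dotProduct_transpose_mulVec, dotProduct_comm]

/-- Gordan-type alternative for a convex set and the open negative orthant. -/
theorem exists_nonneg_ne_zero_forall_dotProduct_nonneg {ι : Type*} [Fintype ι]
    {C : Set (ι → ℝ)} (hC : Convex ℝ C) (hCne : C.Nonempty) (hCneg : ∀ c ∈ C, ∃ j, 0 ≤ c j) :
    ∃ v : ι → ℝ, 0 ≤ v ∧ v ≠ 0 ∧ ∀ c ∈ C, 0 ≤ v ⬝ᵥ c := by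
  classical
  set N : Set (ι → ℝ) := univ.pi fun _ ↦ Iio 0
  have hNC : Disjoint N C := by
    refine Set.disjoint_left.2 fun w hw hwC ↦ ?_
    obtain ⟨j, hj⟩ := hCneg w hwC
    exact (hj.trans_lt (hw j (mem_univ j))).false
  obtain ⟨f, u, hfN, hfC⟩ := geometric_hahn_banach_open
    (convex_pi fun _ _ ↦ convex_Iio 0) (isOpen_set_pi finite_univ fun _ _ ↦ isOpen_Iio) hC hNC
  obtain ⟨v, hfv⟩ := (dotProductEquiv ℝ ι).surjective f.toLinearMap
  have hf : ∀ w, f w = v ⬝ᵥ w := fun w ↦ (LinearMap.congr_fun hfv w).symm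
  have hfu : ∀ w : ι → ℝ, w ≤ 0 → f w ≤ u := by
    have : closure N ⊆ {w | f w ≤ u} :=
      closure_minimal (fun w hw ↦ (hfN w hw).le) (isClosed_le f.continuous continuous_const)
    simpa [N, closure_pi_set, closure_Iio, subset_def, Pi.le_def] using this
  have hu : 0 ≤ u := by simpa using hfu 0 le_rfl
  have hv : 0 ≤ v := fun j ↦ by
    have := nonpos_of_forall_nonneg_mul_le (a := -v j) (u := u) fun t ht ↦ by
      have := hfu (-t • Pi.single j 1) fun i ↦ by
        rcases eq_or_ne i j with rfl | hij <;> simp [*]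
      simpa [hf] using this
    simpa using this
  obtain ⟨c, hc⟩ := hCne
  refine ⟨v, hv, fun hv0 ↦ ?_, fun c hc ↦ hu.trans (hf c ▸ hfC c hc)⟩
  have h₁ := hfN (-1) fun j _ ↦ by simp
  have h₂ := hfC c hc
  simp only [hf, hv0, zero_dotProduct] at h₁ h₂
  linarith

section StrictFeasibility

variable {m n ι : Type*} [Fintype m] [Fintype n] [Fintype ι]
  (M : Matrix m n ℝ) (P : Matrix ι n ℝ) (q : m → ℝ) (d : ι → ℝ)

theorem eq_zero_of_exists_strictly_feasible (hz : ∃ z, M *ᵥ z = q ∧ ∀ j, (P *ᵥ z) j < d j)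
    {u : m → ℝ} {v : ι → ℝ} (hobj : q ⬝ᵥ u + d ⬝ᵥ v ≤ 0) (hdual : Mᵀ *ᵥ u + Pᵀ *ᵥ v = 0)
    (hv : 0 ≤ v) : v = 0 := by
  obtain ⟨z, hMz, hPz⟩ := hz
  by_contra hv0
  have hslack : 0 < v ⬝ᵥ (d - P *ᵥ z) :=
    dotProduct_pos_of_nonneg_of_ne_zero hv hv0 fun j ↦ sub_pos.2 (hPz j)
  have hpair : u ⬝ᵥ q + v ⬝ᵥ P *ᵥ z = 0 := by
    have := congrArg (z ⬝ᵥ ·) hdual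
    simpa only [dotProduct_add, dotProduct_transpose_mulVec, dotProduct_zero, hMz] using this
  rw [dotProduct_sub, dotProduct_comm v d, dotProduct_comm q u] at *
  linarith

theorem exists_strictly_feasible_of_forall_dual (hfeas : ∃ z, M *ᵥ z = q)
    (hdual : ∀ (u : m → ℝ) (v : ι → ℝ), q ⬝ᵥ u + d ⬝ᵥ v ≤ 0 → Mᵀ *ᵥ u + Pᵀ *ᵥ v = 0 → 0 ≤ v →
      v = 0) :
    ∃ z, M *ᵥ z = q ∧ ∀ j, (P *ᵥ z) j < d j := by
  obtain ⟨z₀, hz₀⟩ := hfeas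
  by_contra! hno
  have hconv : Convex ℝ ((fun z ↦ P *ᵥ z - d) '' {z | M *ᵥ z = q}) :=
    ((convex_singleton q).linear_preimage M.mulVecLin).affine_image
      (P.mulVecLin.toAffineMap - AffineMap.const ℝ _ d)
  obtain ⟨v, hv, hv0, hvC⟩ := exists_nonneg_ne_zero_forall_dotProduct_nonneg hconv
    ⟨_, z₀, hz₀, rfl⟩ fun _ ⟨z, hz, hc⟩ ↦ hc ▸ (hno z hz).imp fun _ ↦ sub_nonneg.2
  have hker : ∀ y, M *ᵥ y = 0 → Pᵀ *ᵥ v ⬝ᵥ y = 0 := fun y hy ↦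
    eq_zero_of_forall_add_mul_nonneg fun t ↦ by
      have hline : v ⬝ᵥ (P *ᵥ (z₀ + t • y) - d) = v ⬝ᵥ (P *ᵥ z₀ - d) + t * (Pᵀ *ᵥ v ⬝ᵥ y) := by
        rw [dotProduct_comm (Pᵀ *ᵥ v), dotProduct_transpose_mulVec]
        simp only [mulVec_add, mulVec_smul, dotProduct_add, dotProduct_sub, dotProduct_smul,
          smul_eq_mul]
        ring
      exact hline ▸ hvC _ ⟨z₀ + t • y, by simp [mulVec_add, mulVec_smul, hz₀, hy], rfl⟩
  obtain ⟨u, hu⟩ := M.exists_transpose_mulVec_eq_of_forall_mulVec_eq_zero _ hker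
  refine hv0 (hdual (-u) v ?_ (by rw [mulVec_neg, hu, neg_add_cancel]) hv)
  have hval : q ⬝ᵥ u = v ⬝ᵥ P *ᵥ z₀ := by
    rw [← hz₀, dotProduct_comm, ← dotProduct_transpose_mulVec, hu, dotProduct_transpose_mulVec]
  have := hvC _ ⟨z₀, hz₀, rfl⟩
  rw [dotProduct_sub] at this
  rw [dotProduct_neg, dotProduct_comm d]
  linarith

end StrictFeasibility

theorem stmt8_general (k r n : ℕ) (M : Matrix (Fin k) (Fin n) ℝ) (P : Matrix (Fin r) (Fin n) ℝ)
    (q : Fin k → ℝ) (d : Fin r → ℝ)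
    (hfeas : ∃ z : Fin n → ℝ, M.mulVec z = q ∧ ∀ j, P.mulVec z j ≤ d j) :
    (∃ z : Fin n → ℝ, M.mulVec z = q ∧ ∀ j, P.mulVec z j < d j) ↔
    (∀ (u : Fin k → ℝ) (v : Fin r → ℝ),
        (∑ i, q i * u i) + (∑ j, d j * v j) ≤ 0 →
        M.transpose.mulVec u + P.transpose.mulVec v = 0 →
        (∀ j, 0 ≤ v j) → v = 0) :=
  ⟨fun hz _ _ hobj hdual hv ↦ eq_zero_of_exists_strictly_feasible M P q d hz hobj hdual hv,
    fun h ↦ exists_strictly_feasible_of_forall_dual M P q d (hfeas.imp fun _ ↦ And.left) h⟩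

/-- Strict feasibility of a linear system via LP duality: assuming `N(Mᵀ) = {0}` and
feasibility of `Mz = q, Pz ≤ d`, there is `z̄` with `Mz̄ = q, Pz̄ < d` iff the only `(u,v)`
with `qᵀu + dᵀv ≤ 0`, `Mᵀu + Pᵀv = 0`, `v ≥ 0` has `v = 0`. -/
theorem stmt8 (k r n : ℕ) (M : Matrix (Fin k) (Fin n) ℝ) (P : Matrix (Fin r) (Fin n) ℝ)
    (q : Fin k → ℝ) (d : Fin r → ℝ)
    (hM : ∀ u : Fin k → ℝ, M.transpose.mulVec u = 0 → u = 0)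
    (hfeas : ∃ z : Fin n → ℝ, M.mulVec z = q ∧ ∀ j, P.mulVec z j ≤ d j) :
    (∃ z : Fin n → ℝ, M.mulVec z = q ∧ ∀ j, P.mulVec z j < d j) ↔
    (∀ (u : Fin k → ℝ) (v : Fin r → ℝ),
        (∑ i, q i * u i) + (∑ j, d j * v j) ≤ 0 →
        M.transpose.mulVec u + P.transpose.mulVec v = 0 →
        (∀ j, 0 ≤ v j) → v = 0) :=
  stmt8_general k r n M P q d hfeas
end

section
/- Let A ∈ ℝ^{m×n}, x̄ ∈ ℝⁿ with support S, and suppose there exists y ∈ ℝᵐ with A_Sᵀ y = sign(x̄_S) and ‖A_{Sᶜ}ᵀ y‖_∞ < 1, and the columns of A indexed by S are linearly independent. Then x̄ is the unique minimizer of ‖x‖₁ subject to Ax = Ax̄. -/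
/-- Dual certificate for ℓ¹-minimization: if there is `y` with `A_Sᵀ y = sign(x̄_S)`,
`‖A_{Sᶜ}ᵀ y‖_∞ < 1` and the columns of `A` in `S = supp x̄` are linearly independent,
then `x̄` is the unique minimizer of `‖x‖₁` subject to `Ax = Ax̄`. -/
theorem stmt10 (m n : ℕ) (A : Matrix (Fin m) (Fin n) ℝ) (xb : Fin n → ℝ)
    (y : Fin m → ℝ)
    (hyS : ∀ i, xb i ≠ 0 → ∑ j, A j i * y j = Real.sign (xb i))
    (hySc : ∀ i, xb i = 0 → |∑ j, A j i * y j| < 1)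
    (hli : LinearIndependent ℝ (fun i : {i : Fin n // xb i ≠ 0} => (fun j => A j i.1))) :
    ∀ x : Fin n → ℝ, A.mulVec x = A.mulVec xb → x ≠ xb →
      ∑ i, |xb i| < ∑ i, |x i| := by
  intro x hAx hne
  set c : Fin n → ℝ := fun i => ∑ j, A j i * y j with hc
  have habs : ∀ i, |c i| ≤ 1 := by
    intro i
    by_cases h : xb i = 0
    · exact (hySc i h).le
    · rw [hc]; simp only; rw [hyS i h]
      rcases lt_trichotomy (xb i) 0 with h1 | h1 | h1
      · simp [Real.sign_of_neg h1]
      · exact absurd h1 h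
      · simp [Real.sign_of_pos h1]
  have hrepr : ∀ v : Fin n → ℝ, ∑ i, c i * v i = ∑ j, y j * (A.mulVec v j) := by
    intro v
    simp only [Matrix.mulVec, dotProduct, hc, Finset.sum_mul, Finset.mul_sum]
    rw [Finset.sum_comm]
    apply Finset.sum_congr rfl
    intro j _
    apply Finset.sum_congr rfl
    intro i _
    ring
  have key : ∑ i, c i * x i = ∑ i, c i * xb i := by
    rw [hrepr, hrepr, hAx]
  have hxb1 : ∑ i, c i * xb i = ∑ i, |xb i| := by
    apply Finset.sum_congr rfl
    intro i _
    by_cases h : xb i = 0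
    · simp [h]
    · rw [hc]; simp only; rw [hyS i h]
      rcases lt_trichotomy (xb i) 0 with h1 | h1 | h1
      · rw [Real.sign_of_neg h1, abs_of_neg h1]; ring
      · exact absurd h1 h
      · rw [Real.sign_of_pos h1, abs_of_pos h1]; ring
  by_cases hcase : ∀ i, xb i = 0 → x i = 0
  · -- then x = xb, contradiction
    exfalso
    apply hne
    have hsum : ∑ i : {i : Fin n // xb i ≠ 0}, (x i.1 - xb i.1) • (fun j => A j i.1)
        = (0 : Fin m → ℝ) := by
      funext j
      have h1 : ∑ i : {i : Fin n // xb i ≠ 0}, (x i.1 - xb i.1) * A j i.1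
          = ∑ i : Fin n, (x i - xb i) * A j i := by
        rw [← Finset.sum_subtype (Finset.univ.filter (fun i => xb i ≠ 0))
          (by simp) (fun i => (x i - xb i) * A j i)]
        apply Finset.sum_filter_of_ne
        intro i _ hne0 h0
        exact hne0 (by rw [hcase i h0, h0]; ring)
      have h2 : ∑ i : Fin n, (x i - xb i) * A j i = 0 := by
        have := congrFun hAx j
        simp only [Matrix.mulVec, dotProduct] at this
        have : ∑ i, A j i * x i - ∑ i, A j i * xb i = 0 := by rw [this]; ring
        rw [← Finset.sum_sub_distrib] at this
        rw [← this]
        apply Finset.sum_congr rfl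
        intro i _
        ring
      simpa [Finset.sum_apply] using h1.trans h2
    have hzero := Fintype.linearIndependent_iff.mp hli
      (fun i => x i.1 - xb i.1) hsum
    funext i
    by_cases h : xb i = 0
    · rw [hcase i h, h]
    · have := hzero ⟨i, h⟩
      simp only at this
      linarith
  · push_neg at hcase
    obtain ⟨i0, h0, hx0⟩ := hcase
    calc ∑ i, |xb i| = ∑ i, c i * x i := by rw [key, hxb1]
      _ < ∑ i, |x i| := by
          apply Finset.sum_lt_sum
          · intro i _
            calc c i * x i ≤ |c i * x i| := le_abs_self _
              _ = |c i| * |x i| := abs_mul _ _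
              _ ≤ 1 * |x i| := by
                  apply mul_le_mul_of_nonneg_right (habs i) (abs_nonneg _)
              _ = |x i| := one_mul _
          · refine ⟨i0, Finset.mem_univ _, ?_⟩
            calc c i0 * x i0 ≤ |c i0| * |x i0| := by rw [← abs_mul]; exact le_abs_self _
              _ < 1 * |x i0| := by
                  apply mul_lt_mul_of_pos_right (hySc i0 h0) (abs_pos.mpr hx0)
              _ = |x i0| := one_mul _
end

section
/- Let A ∈ ℝ^{m×n}, x̄ ∈ ℝⁿ₊ with support S, and suppose there exists y ∈ ℝᵐ with A_Sᵀ y = 𝟙_S (all-ones on S) and A_{Sᶜ}ᵀ y < 𝟙_{Sᶜ} componentwise, and the columns of A indexed by S are linearly independent. Then x̄ is the unique minimizer of ‖x‖₁ subject to Ax = Ax̄ and x ≥ 0. -/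
/-- Dual certificate for nonnegative ℓ¹-minimization: if `x̄ ≥ 0`, there is `y` with
`A_Sᵀ y = 𝟙_S`, `A_{Sᶜ}ᵀ y < 𝟙_{Sᶜ}` (`S = supp x̄`) and the columns of `A` in `S` are
linearly independent, then `x̄` is the unique minimizer of `‖x‖₁` s.t. `Ax = Ax̄, x ≥ 0`. -/
theorem stmt11 (m n : ℕ) (A : Matrix (Fin m) (Fin n) ℝ) (xb : Fin n → ℝ)
    (hxb : ∀ i, 0 ≤ xb i) (y : Fin m → ℝ)
    (hyS : ∀ i, 0 < xb i → ∑ j, A j i * y j = 1)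
    (hySc : ∀ i, xb i = 0 → ∑ j, A j i * y j < 1)
    (hli : LinearIndependent ℝ (fun i : {i : Fin n // 0 < xb i} => (fun j => A j i.1))) :
    ∀ x : Fin n → ℝ, (∀ i, 0 ≤ x i) → A.mulVec x = A.mulVec xb → x ≠ xb →
      ∑ i, |xb i| < ∑ i, |x i| := by
  intro x hx hAx hne
  set c : Fin n → ℝ := fun i => ∑ j, A j i * y j with hc
  have h1 : ∀ z : Fin n → ℝ, ∑ i, z i * c i = ∑ j, A.mulVec z j * y j := by
    intro z
    simp only [hc, Matrix.mulVec, dotProduct, Finset.mul_sum, Finset.sum_mul]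
    rw [Finset.sum_comm]
    exact Finset.sum_congr rfl fun j _ => Finset.sum_congr rfl fun i _ => by ring
  have hkey : ∑ i, x i * c i = ∑ i, xb i * c i := by rw [h1, h1, hAx]
  have hxbc : ∑ i, xb i * c i = ∑ i, xb i := by
    refine Finset.sum_congr rfl fun i _ => ?_
    rcases (hxb i).lt_or_eq with h | h
    · have h1 : c i = 1 := hyS i h
      rw [h1]; ring
    · rw [← h]; ring
  have habs : ∀ z : Fin n → ℝ, (∀ i, 0 ≤ z i) → ∑ i, |z i| = ∑ i, z i := by
    intro z hz
    exact Finset.sum_congr rfl fun i _ => abs_of_nonneg (hz i)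
  have hcle : ∀ i, c i ≤ 1 := by
    intro i
    rcases (hxb i).lt_or_eq with h | h
    · exact le_of_eq (hyS i h)
    · exact le_of_lt (hySc i h.symm)
  rw [habs x hx, habs xb hxb]
  by_cases hex : ∃ i, 0 < x i ∧ xb i = 0
  · obtain ⟨i0, hi0, hxb0⟩ := hex
    have : ∑ i, x i * c i < ∑ i, x i := by
      refine Finset.sum_lt_sum (fun i _ => ?_) ⟨i0, Finset.mem_univ i0, ?_⟩
      · calc x i * c i ≤ x i * 1 := mul_le_mul_of_nonneg_left (hcle i) (hx i)
          _ = x i := mul_one _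
      · calc x i0 * c i0 < x i0 * 1 :=
              mul_lt_mul_of_pos_left (hySc i0 hxb0) hi0
          _ = x i0 := mul_one _
    linarith [hkey, hxbc]
  · exfalso
    push_neg at hex
    have hsupp : ∀ i, xb i = 0 → x i = 0 := by
      intro i h
      rcases (hx i).lt_or_eq with h' | h'
      · exact absurd h (hex i h')
      · exact h'.symm
    set d : Fin n → ℝ := fun i => x i - xb i with hd
    have hd0 : ∀ i, xb i = 0 → d i = 0 := by
      intro i h; simp [hd, hsupp i h, h]
    have hAd : ∀ j, ∑ i, A j i * d i = 0 := by
      intro j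
      have := congrFun hAx j
      simp only [Matrix.mulVec, dotProduct] at this
      simp only [hd, mul_sub, Finset.sum_sub_distrib, this, sub_self]
    have hsum : ∑ i : {i : Fin n // 0 < xb i}, (d i.1) • (fun j => A j i.1) =
        (0 : Fin m → ℝ) := by
      funext j
      rw [Finset.sum_apply]
      simp only [Pi.smul_apply, smul_eq_mul, Pi.zero_apply]
      rw [← Finset.sum_subtype (Finset.univ.filter fun i => 0 < xb i) (by simp)
        (fun i => d i * A j i), Finset.sum_filter_of_ne]
      · rw [← hAd j]; exact Finset.sum_congr rfl fun i _ => mul_comm _ _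
      · intro i _ hne'
        rcases (hxb i).lt_or_eq with h | h
        · exact h
        · exact absurd (by simp [hd0 i h.symm]) hne'
    have hdz := Fintype.linearIndependent_iff.mp hli (fun i => d i.1) hsum
    apply hne
    funext i
    rcases (hxb i).lt_or_eq with h | h
    · have := hdz ⟨i, h⟩
      simp only [hd] at this
      linarith
    · have := hd0 i h.symm
      simp only [hd] at this
      linarith
end

section
/- Let A ∈ ℝ^{m×n} and x̄ ∈ {0,1}ⁿ with support S. If there exists y ∈ ℝᵐ with A_Sᵀ y > 𝟙 and A_{Sᶜ}ᵀ y < 𝟙 (componentwise strict), then x̄ is the unique minimizer of ‖x‖₁ subject to Ax = Ax̄ and 0 ≤ x ≤ 1. -/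
/-- Dual certificate for box-constrained ℓ¹-minimization at a binary point: if there is `y`
with `A_Sᵀ y > 𝟙` and `A_{Sᶜ}ᵀ y < 𝟙` (`S = {i : x̄ i = 1}`), then `x̄` is the unique
minimizer of `‖x‖₁` subject to `Ax = Ax̄` and `0 ≤ x ≤ 1`. -/
theorem stmt12 (m n : ℕ) (A : Matrix (Fin m) (Fin n) ℝ) (xb : Fin n → ℝ)
    (hbin : ∀ i, xb i = 0 ∨ xb i = 1) (y : Fin m → ℝ)
    (hyS : ∀ i, xb i = 1 → 1 < ∑ j, A j i * y j)
    (hySc : ∀ i, xb i = 0 → ∑ j, A j i * y j < 1) :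
    ∀ x : Fin n → ℝ, (∀ i, x i ∈ Set.Icc (0:ℝ) 1) → A.mulVec x = A.mulVec xb → x ≠ xb →
      ∑ i, |xb i| < ∑ i, |x i| := by
  intro x hx hAx hne
  set c : Fin n → ℝ := fun i => ∑ j, A j i * y j with hc
  have key : ∑ i, c i * (x i - xb i) = 0 := by
    have h1 : ∀ z : Fin n → ℝ, ∑ i, c i * z i = ∑ j, y j * (A.mulVec z j) := by
      intro z
      simp only [hc, Matrix.mulVec, dotProduct, Finset.mul_sum, Finset.sum_mul]
      rw [Finset.sum_comm]
      exact Finset.sum_congr rfl fun i _ => Finset.sum_congr rfl fun j _ => by ring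
    have := congrArg (fun v => ∑ j, y j * v j) hAx
    simp only [mul_sub, Finset.sum_sub_distrib, h1]
    simpa [sub_eq_zero] using this
  have hle : ∀ i ∈ Finset.univ, c i * (x i - xb i) ≤ x i - xb i := by
    intro i _
    rcases hbin i with h0 | h1
    · have hc1 : c i < 1 := hySc i h0
      have : 0 ≤ x i - xb i := by
        have := (hx i).1; simp [h0]; linarith
      nlinarith
    · have hc1 : 1 < c i := hyS i h1
      have : x i - xb i ≤ 0 := by
        have := (hx i).2; simp [h1]; linarith
      nlinarith
  have hlt : ∃ i ∈ Finset.univ, c i * (x i - xb i) < x i - xb i := by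
    have : ∃ i, x i ≠ xb i := by
      by_contra h; push_neg at h; exact hne (funext h)
    obtain ⟨i, hi⟩ := this
    refine ⟨i, Finset.mem_univ i, ?_⟩
    rcases hbin i with h0 | h1
    · have hc1 : c i < 1 := hySc i h0
      have hp : 0 < x i - xb i := by
        have := (hx i).1; rw [h0] at hi ⊢; cases lt_or_eq_of_le this with
        | inl h => linarith
        | inr h => exact absurd h.symm hi
      nlinarith
    · have hc1 : 1 < c i := hyS i h1
      have hp : x i - xb i < 0 := by
        have := (hx i).2; rw [h1] at hi ⊢; cases lt_or_eq_of_le this with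
        | inl h => linarith
        | inr h => exact absurd h hi
      nlinarith
  have hsum : (0:ℝ) < ∑ i, (x i - xb i) := by
    calc (0:ℝ) = ∑ i, c i * (x i - xb i) := key.symm
    _ < ∑ i, (x i - xb i) := Finset.sum_lt_sum hle hlt
  have habs : ∀ i, |xb i| = xb i ∧ |x i| = x i := by
    intro i
    constructor
    · rcases hbin i with h | h <;> simp [h]
    · exact abs_of_nonneg (hx i).1
  calc ∑ i, |xb i| = ∑ i, xb i := by simp [fun i => (habs i).1]
  _ < ∑ i, x i := by rw [← sub_pos, ← Finset.sum_sub_distrib]; exact hsum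
  _ = ∑ i, |x i| := by simp [fun i => (habs i).2]
end

section
/- Let A ∈ ℝ^{m×n} and x̄ ∈ {0,1}ⁿ with support S. If there exists y ∈ ℝᵐ with aᵢᵀy > 1 for i ∈ S and aᵢᵀy < 1 for i ∉ S (where aᵢ are the columns of A), then for every x ∈ [0,1]ⁿ with Ax = Ax̄ and x ≠ x̄ one has ‖x‖₁ > ‖x̄‖₁. -/
/-!
Put `c := yᵀA`, so `cᵢ = aᵢᵀy`. Since `A(x - x̄) = 0`, the vector `c` is orthogonal to `x - x̄`, hence
`‖x‖₁ - ‖x̄‖₁ = ∑ᵢ (xᵢ - x̄ᵢ) = ∑ᵢ (1 - cᵢ)(xᵢ - x̄ᵢ)`. In the box `[0,1]ⁿ` a coordinate can only move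
down from `x̄ᵢ = 1`, where `1 - cᵢ < 0`, and only up from `x̄ᵢ = 0`, where `1 - cᵢ > 0`; so every
summand is nonnegative and those with `xᵢ ≠ x̄ᵢ` are positive.
-/

open Finset Matrix

section Coordinate

variable {b t c : ℝ}

lemma one_sub_mul_sub_pos (hb : b = 0 ∨ b = 1) (ht : t ∈ Set.Icc (0 : ℝ) 1)
    (hS : b = 1 → 1 < c) (hSc : b ≠ 1 → c < 1) (hne : t ≠ b) :
    0 < (1 - c) * (t - b) := by
  obtain ⟨ht0, ht1⟩ := ht
  rcases hb with rfl | rfl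
  · have hc : c < 1 := hSc zero_ne_one
    exact mul_pos (by linarith) (by rw [sub_zero]; exact lt_of_le_of_ne ht0 hne.symm)
  · have hc : 1 < c := hS rfl
    exact mul_pos_of_neg_of_neg (by linarith) (sub_neg.2 (lt_of_le_of_ne ht1 hne))

lemma one_sub_mul_sub_nonneg (hb : b = 0 ∨ b = 1) (ht : t ∈ Set.Icc (0 : ℝ) 1)
    (hS : b = 1 → 1 < c) (hSc : b ≠ 1 → c < 1) :
    0 ≤ (1 - c) * (t - b) := by
  rcases eq_or_ne t b with rfl | hne
  · simp
  · exact (one_sub_mul_sub_pos hb ht hS hSc hne).le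

end Coordinate

theorem sum_lt_sum_of_dotProduct_sub_eq_zero {ι : Type*} [Fintype ι] {x xb c : ι → ℝ}
    (hbin : ∀ i, xb i = 0 ∨ xb i = 1) (hx : ∀ i, x i ∈ Set.Icc (0 : ℝ) 1)
    (hS : ∀ i, xb i = 1 → 1 < c i) (hSc : ∀ i, xb i ≠ 1 → c i < 1)
    (horth : c ⬝ᵥ (x - xb) = 0) (hne : x ≠ xb) :
    ∑ i, xb i < ∑ i, x i := by
  obtain ⟨i₀, hi₀⟩ := Function.ne_iff.mp hne
  have hpos : 0 < ∑ i, (1 - c i) * (x i - xb i) :=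
    sum_pos' (fun i _ => one_sub_mul_sub_nonneg (hbin i) (hx i) (hS i) (hSc i))
      ⟨i₀, mem_univ _, one_sub_mul_sub_pos (hbin i₀) (hx i₀) (hS i₀) (hSc i₀) hi₀⟩
  have hsum : ∑ i, (1 - c i) * (x i - xb i) = ∑ i, x i - ∑ i, xb i := by
    simp only [dotProduct, Pi.sub_apply] at horth
    simp only [one_sub_mul, sum_sub_distrib, horth, sub_zero]
  linarith

/-- Explicit uniqueness certificate for box-constrained ℓ¹-minimization at a binary point:
if `aᵢᵀy > 1` for `i ∈ S` and `aᵢᵀy < 1` for `i ∉ S` (`S = {i : x̄ i = 1}`), then every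
feasible `x ∈ [0,1]ⁿ` with `Ax = Ax̄`, `x ≠ x̄` satisfies `‖x‖₁ > ‖x̄‖₁`. -/
theorem stmt13 (m n : ℕ) (A : Matrix (Fin m) (Fin n) ℝ) (xb : Fin n → ℝ)
    (hbin : ∀ i, xb i = 0 ∨ xb i = 1) (y : Fin m → ℝ)
    (hyS : ∀ i, xb i = 1 → 1 < ∑ j, A j i * y j)
    (hySc : ∀ i, xb i ≠ 1 → ∑ j, A j i * y j < 1) :
    ∀ x : Fin n → ℝ, (∀ i, x i ∈ Set.Icc (0:ℝ) 1) → A.mulVec x = A.mulVec xb → x ≠ xb →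
      ∑ i, |x i| > ∑ i, |xb i| := by
  intro x hx hAx hne
  have hc : ∀ i, (y ᵥ* A) i = ∑ j, A j i * y j := fun i => by
    simp only [vecMul, dotProduct, mul_comm]
  have horth : (y ᵥ* A) ⬝ᵥ (x - xb) = 0 := by
    rw [← dotProduct_mulVec, mulVec_sub, hAx, sub_self, dotProduct_zero]
  have hlt := sum_lt_sum_of_dotProduct_sub_eq_zero hbin hx
    (fun i h => (hc i).symm ▸ hyS i h) (fun i h => (hc i).symm ▸ hySc i h) horth hne
  have habs : ∀ i, |x i| = x i := fun i => abs_of_nonneg (hx i).1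
  have habsb : ∀ i, |xb i| = xb i := fun i =>
    abs_of_nonneg (by rcases hbin i with h | h <;> simp [h])
  simpa only [habs, habsb] using hlt
end

section
/- Let S ⊆ ℝⁿ be a nonempty compact convex set not containing the origin. Then the function J(τ) = E[dist²(X, τS)], where X ∼ N(0, Iₙ), is convex on [0, ∞). -/
open MeasureTheory ProbabilityTheory

/-- The standard Gaussian measure on `ℝⁿ`. -/
noncomputable def stdGaussianPi (n : ℕ) : Measure (Fin n → ℝ) :=
  Measure.pi fun _ => gaussianReal 0 1

/-!
For a convex set `S` and `τ = a τ₁ + b τ₂` with `a, b, τ₁, τ₂ ≥ 0`, `a + b = 1`, one has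
`a • (τ₁ • S) + b • (τ₂ • S) = τ • S`, so combining near-minimisers for `τ₁` and `τ₂` shows that
`τ ↦ dist(x, τ • S)` is convex on `[0, ∞)` for every `x`. Squaring a nonnegative convex function
keeps it convex, and integrating against any measure preserves convexity; the Gaussian second
moments make every `dist²(X, τ • S)` integrable.
-/

open Metric Set
open scoped Pointwise

theorem sq_infDist_eq_sInf {α : Type*} [PseudoMetricSpace α] (x : α) {s : Set α}
    (hs : s.Nonempty) :
    infDist x s ^ 2 = sInf ((fun y => dist x y ^ 2) '' s) := by
  have hdist_nonneg : ∀ t ∈ dist x '' s, 0 ≤ t := by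
    rintro _ ⟨y, -, rfl⟩
    exact dist_nonneg
  rw [infDist_eq_iInf, iInf, ← image_eq_range,
    MonotoneOn.map_csInf_of_continuousWithinAt (f := fun t : ℝ => t ^ 2)
      (continuous_pow 2).continuousWithinAt
      (fun a ha b _ hab => pow_le_pow_left₀ (hdist_nonneg a ha) hab 2) (hs.image _)
      ⟨0, hdist_nonneg⟩, image_image]

theorem convexOn_infDist_smul {E : Type*} [NormedAddCommGroup E] [NormedSpace ℝ E] {S : Set E}
    (hS : Convex ℝ S) (hne : S.Nonempty) (x : E) :
    ConvexOn ℝ (Ici 0) fun τ : ℝ => infDist x (τ • S) := by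
  refine ⟨convex_Ici 0, fun τ₁ h₁ τ₂ h₂ a b ha hb hab => ?_⟩
  simp only [smul_eq_mul]
  refine le_of_forall_pos_le_add fun ε hε => ?_
  obtain ⟨z₁, hz₁, hd₁⟩ :=
    (infDist_lt_iff (hne.smul_set (a := τ₁))).1 (lt_add_of_pos_right _ hε)
  obtain ⟨z₂, hz₂, hd₂⟩ :=
    (infDist_lt_iff (hne.smul_set (a := τ₂))).1 (lt_add_of_pos_right _ hε)
  have hz : a • z₁ + b • z₂ ∈ (a * τ₁ + b * τ₂) • S := by
    rw [hS.add_smul (mul_nonneg ha h₁) (mul_nonneg hb h₂), mul_smul, mul_smul]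
    exact add_mem_add (smul_mem_smul_set hz₁) (smul_mem_smul_set hz₂)
  calc infDist x ((a * τ₁ + b * τ₂) • S)
      ≤ dist (a • x + b • x) (a • z₁ + b • z₂) := by
        rw [← add_smul, hab, one_smul]; exact infDist_le_dist_of_mem hz
    _ ≤ a * dist x z₁ + b * dist x z₂ := by
        refine (dist_add_add_le _ _ _ _).trans_eq ?_
        rw [dist_smul₀, dist_smul₀, Real.norm_of_nonneg ha, Real.norm_of_nonneg hb]
    _ ≤ a * (infDist x (τ₁ • S) + ε) + b * (infDist x (τ₂ • S) + ε) := by gcongr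
    _ = a * infDist x (τ₁ • S) + b * infDist x (τ₂ • S) + ε := by linear_combination ε * hab

theorem convexOn_integral {E α : Type*} [AddCommGroup E] [Module ℝ E] [MeasurableSpace α]
    {μ : Measure α} {s : Set E} {f : E → α → ℝ} (hs : Convex ℝ s)
    (hint : ∀ τ ∈ s, Integrable (f τ) μ) (hconv : ∀ᵐ x ∂μ, ConvexOn ℝ s fun τ => f τ x) :
    ConvexOn ℝ s fun τ => ∫ x, f τ x ∂μ := by
  refine ⟨hs, fun τ₁ h₁ τ₂ h₂ a b ha hb hab => ?_⟩
  simp only [smul_eq_mul]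
  rw [← integral_const_mul, ← integral_const_mul,
    ← integral_add ((hint τ₁ h₁).const_mul a) ((hint τ₂ h₂).const_mul b)]
  exact integral_mono_ae (hint _ (hs h₁ h₂ ha hb hab))
    (((hint τ₁ h₁).const_mul a).add ((hint τ₂ h₂).const_mul b))
    (hconv.mono fun x hx => hx.2 h₁ h₂ ha hb hab)

section

variable {ι : Type*} [Fintype ι]

theorem sInf_sum_sq_sub_smul_eq_sq_infDist {S : Set (ι → ℝ)}
    (hne : S.Nonempty) (τ : ℝ) (x : ι → ℝ) :
    sInf {r : ℝ | ∃ y ∈ S, r = ∑ i, (x i - τ * y i) ^ 2}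
      = infDist (WithLp.toLp 2 x : EuclideanSpace ℝ ι) (τ • (WithLp.toLp 2 '' S)) ^ 2 := by
  rw [sq_infDist_eq_sInf _ ((hne.image _).smul_set)]
  congr 1
  ext r
  simp [← image_smul, EuclideanSpace.dist_sq_eq, Real.dist_eq, sq_abs, eq_comm]

theorem integrable_sum_sq_sub_pi {μ : ι → Measure ℝ}
    [∀ i, IsProbabilityMeasure (μ i)] (hμ : ∀ i, MemLp id 2 (μ i)) (y : ι → ℝ) :
    Integrable (fun x => ∑ i, (x i - y i) ^ 2) (Measure.pi μ) :=
  integrable_finsetSum _ fun i _ =>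
    (((hμ i).sub (memLp_const (y i))).comp_measurePreserving
      (measurePreserving_eval μ i)).integrable_sq

theorem integrable_sq_infDist_smul {μ : ι → Measure ℝ}
    [∀ i, IsProbabilityMeasure (μ i)] (hμ : ∀ i, MemLp id 2 (μ i)) {S : Set (ι → ℝ)}
    (hne : S.Nonempty) (τ : ℝ) :
    Integrable
      (fun x => infDist (WithLp.toLp 2 x : EuclideanSpace ℝ ι) (τ • (WithLp.toLp 2 '' S)) ^ 2)
      (Measure.pi μ) := by
  obtain ⟨y, hy⟩ := hne
  have hcont : Continuous fun x : ι → ℝ =>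
      infDist (WithLp.toLp 2 x : EuclideanSpace ℝ ι) (τ • (WithLp.toLp 2 '' S)) ^ 2 :=
    ((continuous_infDist_pt _).comp (PiLp.continuous_toLp 2 fun _ : ι => ℝ)).pow 2
  refine (integrable_sum_sq_sub_pi hμ (τ • y)).mono' hcont.aestronglyMeasurable
    (ae_of_all _ fun x => ?_)
  have hmem : WithLp.toLp 2 (τ • y) ∈ τ • (WithLp.toLp 2 '' S : Set (EuclideanSpace ℝ ι)) := by
    rw [WithLp.toLp_smul]
    exact smul_mem_smul_set (mem_image_of_mem _ hy)
  calc ‖infDist (WithLp.toLp 2 x : EuclideanSpace ℝ ι) (τ • (WithLp.toLp 2 '' S)) ^ 2‖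
      ≤ dist (WithLp.toLp 2 x : EuclideanSpace ℝ ι) (WithLp.toLp 2 (τ • y)) ^ 2 := by
        rw [Real.norm_of_nonneg (sq_nonneg _)]
        exact pow_le_pow_left₀ infDist_nonneg (infDist_le_dist_of_mem hmem) 2
    _ = ∑ i, (x i - (τ • y) i) ^ 2 := by
        simp [EuclideanSpace.dist_sq_eq, Real.dist_eq, sq_abs]

end

theorem stmt15_general (n : ℕ) (S : Set (Fin n → ℝ)) (hne : S.Nonempty)
    (hconv : Convex ℝ S) :
    ConvexOn ℝ (Set.Ici (0:ℝ)) (fun τ =>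
      ∫ x, sInf {r : ℝ | ∃ y ∈ S, r = ∑ i, (x i - τ * y i) ^ 2} ∂(stdGaussianPi n)) := by
  have hgauss : ∀ _ : Fin n, MemLp id 2 (gaussianReal 0 1) := fun _ => memLp_id_gaussianReal 2
  have hT : Convex ℝ (WithLp.toLp 2 '' S : Set (EuclideanSpace ℝ (Fin n))) :=
    hconv.linear_image (WithLp.linearEquiv 2 ℝ (Fin n → ℝ)).symm.toLinearMap
  simp_rw [sInf_sum_sq_sub_smul_eq_sq_infDist hne]
  exact convexOn_integral (convex_Ici 0) (fun τ _ => integrable_sq_infDist_smul hgauss hne τ)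
    (ae_of_all _ fun x => (convexOn_infDist_smul hT (hne.image _) _).pow
      (fun _ _ => infDist_nonneg) 2)

/-- For a nonempty compact convex `S ⊆ ℝⁿ` with `0 ∉ S`, the function
`J(τ) = E[dist²(X, τS)]` (standard Gaussian `X`, Euclidean distance) is convex on `[0,∞)`. -/
theorem stmt15 (n : ℕ) (S : Set (Fin n → ℝ)) (hne : S.Nonempty)
    (hcomp : IsCompact S) (hconv : Convex ℝ S) (h0 : (0 : Fin n → ℝ) ∉ S) :
    ConvexOn ℝ (Set.Ici (0:ℝ)) (fun τ =>
      ∫ x, sInf {r : ℝ | ∃ y ∈ S, r = ∑ i, (x i - τ * y i) ^ 2} ∂(stdGaussianPi n)) :=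
  stmt15_general n S hne hconv
end

section
/- For a closed convex cone K ⊆ ℝⁿ and standard Gaussian X ∼ N(0, Iₙ), the Gaussian width ω(K ∩ Sⁿ⁻¹)² is at most δ(K), where δ(K) = E[‖Π_K(X)‖²] and ω(C) = E[sup_{z∈C} ⟨X, z⟩]. -/
/-!
If `z ∈ K` and `‖z‖ = 1`, then `Π_K x + z ∈ K` because `K` is a convex cone, so the variational
inequality `⟪x - Π_K x, (Π_K x + z) - Π_K x⟫ ≤ 0` gives `⟪x, z⟫ ≤ ⟪Π_K x, z⟫ ≤ ‖Π_K x‖`. Hence the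
width integrand is at most `‖Π_K X‖`; its mean is nonnegative because it dominates the centred
variable `⟪X, z₀⟫`, so `ω² ≤ (E ‖Π_K X‖)² ≤ E ‖Π_K X‖²` by Jensen. The coordinate statement is
moved to `EuclideanSpace ℝ (Fin n)`, onto which the product Gaussian pushes forward to
`stdGaussian`.
-/

open MeasureTheory ProbabilityTheory Metric
open scoped RealInnerProductSpace

theorem Convex.add_mem_of_smul_mem {E : Type*} [AddCommGroup E] [Module ℝ E] {K : Set E}
    (hK : Convex ℝ K) (hcone : ∀ c : ℝ, 0 ≤ c → ∀ x ∈ K, c • x ∈ K) {x y : E} (hx : x ∈ K)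
    (hy : y ∈ K) : x + y ∈ K := by
  have h := hcone 2 zero_le_two _ (hK hx hy (by norm_num : (0 : ℝ) ≤ 1 / 2)
    (by norm_num : (0 : ℝ) ≤ 1 / 2) (by norm_num))
  rwa [smul_add, smul_smul, smul_smul, show (2 : ℝ) * (1 / 2) = 1 by norm_num, one_smul,
    one_smul] at h

section MetricProjection

variable {E : Type*} [NormedAddCommGroup E] {K : Set E} {P : E → E}

def IsMetricProjection (K : Set E) (P : E → E) : Prop :=
  ∀ x, P x ∈ K ∧ ∀ y ∈ K, ‖x - P x‖ ≤ ‖x - y‖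

theorem IsMetricProjection.map_zero (hP : IsMetricProjection K P) (h0 : (0 : E) ∈ K) :
    P 0 = 0 := by
  simpa using (hP 0).2 0 h0

variable [InnerProductSpace ℝ E]

namespace IsMetricProjection

theorem inner_sub_le_zero (hP : IsMetricProjection K P) (hK : Convex ℝ K) (x : E) {y : E}
    (hy : y ∈ K) : ⟪x - P x, y - P x⟫ ≤ 0 := by
  have : Nonempty K := ⟨⟨y, hy⟩⟩
  refine (norm_eq_iInf_iff_real_inner_le_zero hK (hP x).1).1 (le_antisymm ?_ ?_) y hy
  · exact le_ciInf fun w => (hP x).2 w w.2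
  · exact ciInf_le (f := fun w : K => ‖x - w‖) ⟨0, by rintro _ ⟨w, rfl⟩; positivity⟩
      ⟨P x, (hP x).1⟩

theorem lipschitzWith_one (hP : IsMetricProjection K P) (hK : Convex ℝ K) :
    LipschitzWith 1 P := by
  refine LipschitzWith.of_dist_le_mul fun x y => ?_
  rw [NNReal.coe_one, one_mul, dist_eq_norm, dist_eq_norm]
  have hx := hP.inner_sub_le_zero hK x (hP y).1
  have hy := hP.inner_sub_le_zero hK y (hP x).1
  -- adding the two variational inequalities gives `‖P x - P y‖² ≤ ⟪x - y, P x - P y⟫`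
  have key : ‖P x - P y‖ ^ 2 ≤ ‖x - y‖ * ‖P x - P y‖ := by
    calc ‖P x - P y‖ ^ 2
        = ⟪x - y, P x - P y⟫ + ⟪x - P x, P y - P x⟫ + ⟪y - P y, P x - P y⟫ := by
          rw [← real_inner_self_eq_norm_sq]
          simp only [inner_sub_left, inner_sub_right, real_inner_comm]
          ring
      _ ≤ ⟪x - y, P x - P y⟫ := by linarith
      _ ≤ ‖x - y‖ * ‖P x - P y‖ := real_inner_le_norm _ _
  rcases (norm_nonneg (P x - P y)).eq_or_lt with h0 | hpos
  · rw [← h0]; positivity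
  · nlinarith

theorem norm_le (hP : IsMetricProjection K P) (hK : Convex ℝ K) (h0 : (0 : E) ∈ K) (x : E) :
    ‖P x‖ ≤ ‖x‖ := by
  simpa [hP.map_zero h0] using (hP.lipschitzWith_one hK).dist_le_mul x 0

theorem inner_le_norm_mul_norm (hP : IsMetricProjection K P) (hK : Convex ℝ K)
    (hcone : ∀ c : ℝ, 0 ≤ c → ∀ x ∈ K, c • x ∈ K) (x : E) {z : E} (hz : z ∈ K) :
    ⟪x, z⟫ ≤ ‖P x‖ * ‖z‖ := by
  have h := hP.inner_sub_le_zero hK x (hK.add_mem_of_smul_mem hcone (hP x).1 hz)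
  rw [add_sub_cancel_left, inner_sub_left] at h
  linarith [real_inner_le_norm (P x) z]

theorem inner_le_norm_of_mem_sphere (hP : IsMetricProjection K P) (hK : Convex ℝ K)
    (hcone : ∀ c : ℝ, 0 ≤ c → ∀ x ∈ K, c • x ∈ K) (x : E) {z : E}
    (hz : z ∈ K ∩ sphere 0 1) : ⟪x, z⟫ ≤ ‖P x‖ := by
  simpa [mem_sphere_zero_iff_norm.1 hz.2] using hP.inner_le_norm_mul_norm hK hcone x hz.1

theorem sSup_inner_le (hP : IsMetricProjection K P) (hK : Convex ℝ K)
    (hcone : ∀ c : ℝ, 0 ≤ c → ∀ x ∈ K, c • x ∈ K) (x : E) :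
    sSup ((fun z => ⟪x, z⟫) '' (K ∩ sphere 0 1)) ≤ ‖P x‖ := by
  refine Real.sSup_le ?_ (norm_nonneg _)
  rintro _ ⟨z, hz, rfl⟩
  exact hP.inner_le_norm_of_mem_sphere hK hcone x hz

end IsMetricProjection

end MetricProjection

section Integrals

variable {α : Type*} [MeasurableSpace α] {μ : Measure α}

theorem sq_integral_le_integral_sq [IsProbabilityMeasure μ] {g : α → ℝ} (hg : MemLp g 2 μ) :
    (∫ x, g x ∂μ) ^ 2 ≤ ∫ x, g x ^ 2 ∂μ := by
  have h := variance_nonneg g μ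
  rw [variance_eq_sub hg] at h
  simpa using h

theorem integral_nonneg_of_integral_eq_zero_of_le {f ℓ : α → ℝ} (hℓ : Integrable ℓ μ)
    (hℓ0 : ∫ x, ℓ x ∂μ = 0) (hle : ∀ x, ℓ x ≤ f x) : 0 ≤ ∫ x, f x ∂μ := by
  by_cases hf : Integrable f μ
  · exact hℓ0 ▸ integral_mono hℓ hf hle
  · rw [integral_undef hf]

theorem sq_integral_le_integral_sq_of_le [IsProbabilityMeasure μ] {f g : α → ℝ}
    (hf : 0 ≤ ∫ x, f x ∂μ) (hfg : ∀ x, f x ≤ g x) (hg : MemLp g 2 μ) :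
    (∫ x, f x ∂μ) ^ 2 ≤ ∫ x, g x ^ 2 ∂μ := by
  by_cases hfi : Integrable f μ
  · calc (∫ x, f x ∂μ) ^ 2 ≤ (∫ x, g x ∂μ) ^ 2 :=
          pow_le_pow_left₀ hf (integral_mono hfi (hg.integrable one_le_two) hfg) 2
      _ ≤ ∫ x, g x ^ 2 ∂μ := sq_integral_le_integral_sq hg
  · rw [integral_undef hfi]
    simpa using integral_nonneg fun x => sq_nonneg (g x)

end Integrals

section GaussianWidth

variable {E : Type*} [NormedAddCommGroup E] [InnerProductSpace ℝ E] {K : Set E} {P : E → E}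

theorem IsMetricProjection.integral_sSup_inner_nonneg [MeasurableSpace E] [CompleteSpace E]
    {μ : Measure E} (hμ : Integrable id μ) (hmean : ∫ x, x ∂μ = 0)
    (hP : IsMetricProjection K P) (hK : Convex ℝ K)
    (hcone : ∀ c : ℝ, 0 ≤ c → ∀ x ∈ K, c • x ∈ K) :
    0 ≤ ∫ x, sSup ((fun z => ⟪x, z⟫) '' (K ∩ sphere 0 1)) ∂μ := by
  rcases (K ∩ sphere 0 1).eq_empty_or_nonempty with hS | ⟨z₀, hz₀⟩
  · simp [hS]
  -- the width integrand dominates the centred linear functional `⟪·, z₀⟫`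
  refine integral_nonneg_of_integral_eq_zero_of_le (ℓ := fun x => ⟪x, z₀⟫) ?_ ?_ fun x => ?_
  · exact hμ.inner_const z₀
  · calc ∫ x, ⟪x, z₀⟫ ∂μ = ∫ x, ⟪z₀, id x⟫ ∂μ := by simp_rw [real_inner_comm z₀]; rfl
      _ = 0 := by rw [integral_inner hμ]; simp only [id, hmean, inner_zero_right]
  · refine le_csSup ⟨‖P x‖, ?_⟩ ⟨z₀, hz₀, rfl⟩
    rintro _ ⟨z, hz, rfl⟩
    exact hP.inner_le_norm_of_mem_sphere hK hcone x hz

theorem IsMetricProjection.sq_integral_sSup_inner_le_integral_norm_sq [MeasurableSpace E]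
    [BorelSpace E] [CompleteSpace E] {μ : Measure E} [IsProbabilityMeasure μ]
    (hμ : MemLp id 2 μ) (hmean : ∫ x, x ∂μ = 0) (hP : IsMetricProjection K P)
    (hK : Convex ℝ K) (hcone : ∀ c : ℝ, 0 ≤ c → ∀ x ∈ K, c • x ∈ K) :
    (∫ x, sSup ((fun z => ⟪x, z⟫) '' (K ∩ sphere 0 1)) ∂μ) ^ 2 ≤ ∫ x, ‖P x‖ ^ 2 ∂μ := by
  have h0 : (0 : E) ∈ K := by simpa using hcone 0 le_rfl _ (hP 0).1
  have hPμ : MemLp (fun x => ‖P x‖) 2 μ :=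
    hμ.of_le (hP.lipschitzWith_one hK).continuous.norm.aestronglyMeasurable
      (ae_of_all _ fun x => by simpa using hP.norm_le hK h0 x)
  exact sq_integral_le_integral_sq_of_le
    (hP.integral_sSup_inner_nonneg (hμ.integrable one_le_two) hmean hK hcone)
    (hP.sSup_inner_le hK hcone) hPμ

end GaussianWidth

section EuclideanCoordinates

variable {ι : Type*} [Fintype ι]

open WithLp

theorem EuclideanSpace.norm_toLp_sq (x : ι → ℝ) : ‖toLp 2 x‖ ^ 2 = ∑ i, x i ^ 2 :=
  EuclideanSpace.real_norm_sq_eq _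

theorem EuclideanSpace.image_inner_inter_sphere (K : Set (ι → ℝ)) (y : EuclideanSpace ℝ ι) :
    (fun w => ⟪y, w⟫) '' (ofLp ⁻¹' K ∩ sphere 0 1) =
      (fun z => ∑ i, ofLp y i * z i) '' (K ∩ {z | ∑ i, z i ^ 2 = 1}) := by
  have hsphere : (ofLp ⁻¹' K ∩ sphere 0 1 : Set (EuclideanSpace ℝ ι)) =
      ofLp ⁻¹' (K ∩ {z | ∑ i, z i ^ 2 = 1}) := by
    ext w
    simp only [Set.mem_inter_iff, Set.mem_preimage, mem_sphere_zero_iff_norm, Set.mem_ofPred_eq,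
      ← EuclideanSpace.real_norm_sq_eq, pow_eq_one_iff_of_nonneg (norm_nonneg w) two_ne_zero]
  calc (fun w => ⟪y, w⟫) '' (ofLp ⁻¹' K ∩ sphere 0 1)
      = ((fun z => ∑ i, ofLp y i * z i) ∘ ofLp) ''
          (ofLp ⁻¹' (K ∩ {z | ∑ i, z i ^ 2 = 1})) := by
        rw [hsphere]
        congr 1
        funext w
        simp [EuclideanSpace.inner_eq_star_dotProduct, dotProduct, mul_comm]
    _ = _ := by rw [Set.image_comp, Set.image_preimage_eq _ (ofLp_surjective 2)]

theorem EuclideanSpace.isMetricProjection_ofLp_preimage {K : Set (ι → ℝ)}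
    {proj : (ι → ℝ) → (ι → ℝ)}
    (h : ∀ x, proj x ∈ K ∧ ∀ y ∈ K, ∑ i, (x i - proj x i) ^ 2 ≤ ∑ i, (x i - y i) ^ 2) :
    IsMetricProjection (ofLp ⁻¹' K : Set (EuclideanSpace ℝ ι))
      (fun y => toLp 2 (proj (ofLp y))) := by
  refine fun y => ⟨(h (ofLp y)).1, fun w hw => ?_⟩
  rw [← pow_le_pow_iff_left₀ (norm_nonneg _) (norm_nonneg _) two_ne_zero,
    ← toLp_ofLp 2 y, ← toLp_ofLp 2 w, ← toLp_sub, ← toLp_sub, EuclideanSpace.norm_toLp_sq,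
    EuclideanSpace.norm_toLp_sq]
  exact (h (ofLp y)).2 _ hw

theorem integral_stdGaussianPi_eq (n : ℕ) (f : (Fin n → ℝ) → ℝ) :
    ∫ x, f x ∂stdGaussianPi n = ∫ y, f (ofLp y) ∂stdGaussian (EuclideanSpace ℝ (Fin n)) := by
  rw [← map_pi_eq_stdGaussian, stdGaussianPi]
  exact (integral_map_equiv (MeasurableEquiv.toLp 2 (Fin n → ℝ)) (fun y => f (ofLp y))).symm

end EuclideanCoordinates

theorem stmt17_general (n : ℕ) (K : Set (Fin n → ℝ))
    (hconv : Convex ℝ K) (hcone : ∀ (c : ℝ), 0 ≤ c → ∀ x ∈ K, c • x ∈ K)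
    (projK : (Fin n → ℝ) → (Fin n → ℝ))
    (hprojK : ∀ x, projK x ∈ K ∧
      ∀ y ∈ K, ∑ i, (x i - projK x i) ^ 2 ≤ ∑ i, (x i - y i) ^ 2) :
    (∫ x, sSup ((fun z => ∑ i, x i * z i) ''
        (K ∩ {z : Fin n → ℝ | ∑ i, (z i) ^ 2 = 1})) ∂(stdGaussianPi n)) ^ 2 ≤
      ∫ x, (∑ i, (projK x i) ^ 2) ∂(stdGaussianPi n) := by
  have hP := EuclideanSpace.isMetricProjection_ofLp_preimage hprojK
  have h := hP.sq_integral_sSup_inner_le_integral_norm_sq IsGaussian.memLp_two_id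
    integral_id_stdGaussian
    (hconv.linear_preimage (WithLp.linearEquiv 2 ℝ (Fin n → ℝ)).toLinearMap)
    (fun c hc y hy => hcone c hc _ hy)
  simp only [EuclideanSpace.image_inner_inter_sphere, EuclideanSpace.norm_toLp_sq] at h
  rw [integral_stdGaussianPi_eq, integral_stdGaussianPi_eq]
  exact h

/-- For a closed convex cone `K ⊆ ℝⁿ`, the squared Gaussian width of `K ∩ Sⁿ⁻¹` is at most
the statistical dimension `δ(K) = E‖Π_K X‖²`. -/
theorem stmt17 (n : ℕ) (K : Set (Fin n → ℝ)) (hne : K.Nonempty) (hcl : IsClosed K)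
    (hconv : Convex ℝ K) (hcone : ∀ (c : ℝ), 0 ≤ c → ∀ x ∈ K, c • x ∈ K)
    (projK : (Fin n → ℝ) → (Fin n → ℝ))
    (hprojK : ∀ x, projK x ∈ K ∧
      ∀ y ∈ K, ∑ i, (x i - projK x i) ^ 2 ≤ ∑ i, (x i - y i) ^ 2) :
    (∫ x, sSup ((fun z => ∑ i, x i * z i) ''
        (K ∩ {z : Fin n → ℝ | ∑ i, (z i) ^ 2 = 1})) ∂(stdGaussianPi n)) ^ 2 ≤
      ∫ x, (∑ i, (projK x i) ^ 2) ∂(stdGaussianPi n) :=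
  stmt17_general n K hconv hcone projK hprojK
end
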